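/- arXiv:2003.14145 — 7 statements merged into one kernel-verified Lean document; each statement's English description precedes it below -/
import Mathlib

section
/- Assume ∫ ‖x‖^r dP(x) < +∞ and let (a_n)_{n≥1} be an L^r-optimal greedy quantization sequence for P. Then for every Borel probability measure ν on ℝ^d, every c ∈ (0,1/2) and every n ≥ 1: e_r(a^{(n)},P)^r − e_r(a^{(n+1)},P)^r ≥ ((1−c)^r − c^r)/(c+1)^r · ∫ ν(B(x, (c/(c+1))·d(x,a^{(n)}))) · d(x,a^{(n)})^r dP(x). -/
open MeasureTheory Metric
open scoped ENNReal NNReal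

/-- The `L^r`-quantization error of a grid `Γ` with respect to the measure `P`:
`e_r(Γ,P) = (∫ d(x,Γ)^r dP(x))^(1/r)`. -/
noncomputable def qerr {E : Type*} [NormedAddCommGroup E] [MeasurableSpace E]
    (r : ℝ) (P : Measure E) (Γ : Set E) : ℝ :=
  (∫ x, infDist x Γ ^ r ∂P) ^ (1 / r)

/-- The first `n` points `a^{(n)} = {a 1, …, a n}` of a sequence `a`. -/
def aSet {E : Type*} (a : ℕ → E) (n : ℕ) : Set E := a '' Set.Icc 1 n

/-- `(a_n)_{n ≥ 1}` is an `L^r`-optimal greedy quantization sequence for `P`: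
for every `n ≥ 0`, `a (n+1)` minimizes `ξ ↦ e_r(a^{(n)} ∪ {ξ}, P)`
(the case `n = 0` says `a 1` minimizes `ξ ↦ e_r({ξ},P)`). -/
def IsGreedy {E : Type*} [NormedAddCommGroup E] [MeasurableSpace E]
    (r : ℝ) (P : Measure E) (a : ℕ → E) : Prop :=
  ∀ (n : ℕ) (ξ : E), qerr r P (aSet a (n + 1)) ≤ qerr r P (insert ξ (aSet a n))

/-! For every `ξ`, greediness gives `e_r(a^{(n+1)},P)^r ≤ e_r(a^{(n)} ∪ {ξ},P)^r`, and adding `ξ`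
lowers `d(x,a^{(n)})^r` by at least `(1 - ρ^r) d(x,a^{(n)})^r` at every `x` with
`‖ξ - x‖ ≤ ρ d(x,a^{(n)})`, where `ρ = c/(c+1)`. Averaging over `ξ ∼ ν` and exchanging the
integrals gives the inequality with the constant `1 - ρ^r`, which dominates
`((1-c)^r - c^r)/(c+1)^r`. -/

open Set

theorem infDist_insert_of_nonempty {X : Type*} [PseudoMetricSpace X] {s : Set X}
    (hs : s.Nonempty) (x y : X) : infDist x (insert y s) = min (dist x y) (infDist x s) := by
  rw [infDist, infDist, ← singleton_union, infEDist_union, infEDist_singleton,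
    ENNReal.toReal_min (edist_ne_top x y) (infEDist_ne_top hs), dist_edist]

theorem one_sub_rpow_mul_rpow_le {ρ t d r : ℝ} (hr : 0 ≤ r) (hρ : 0 ≤ ρ) (ht : 0 ≤ t)
    (hd : 0 ≤ d) (htd : t ≤ ρ * d) : (1 - ρ ^ r) * d ^ r ≤ d ^ r - min t d ^ r := by
  have : min t d ^ r ≤ ρ ^ r * d ^ r := by
    rw [← Real.mul_rpow hρ hd]
    exact Real.rpow_le_rpow (le_min ht hd) ((min_le_left t d).trans htd) hr
  linarith

theorem sub_rpow_div_rpow_le_one_sub_div_rpow {c r : ℝ} (hr : 0 ≤ r) (hc0 : 0 ≤ c)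
    (hc1 : c ≤ 1) : ((1 - c) ^ r - c ^ r) / (c + 1) ^ r ≤ 1 - (c / (c + 1)) ^ r := by
  have hpos : 0 < (c + 1) ^ r := Real.rpow_pos_of_pos (by linarith) r
  have : (1 - c) ^ r / (c + 1) ^ r ≤ 1 :=
    div_le_one_of_le₀ (Real.rpow_le_rpow (by linarith) (by linarith) hr) hpos.le
  rw [Real.div_rpow hc0 (by linarith), sub_div]
  linarith

theorem integral_integral_le_of_forall_integral_le {α β : Type*} [MeasurableSpace α]
    [MeasurableSpace β] {μ : Measure α} {ν : Measure β} [SFinite μ] [IsProbabilityMeasure ν]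
    {f : α → β → ℝ} (hf : Integrable (Function.uncurry f) (μ.prod ν)) {C : ℝ}
    (hC : ∀ y, ∫ x, f x y ∂μ ≤ C) : ∫ x, ∫ y, f x y ∂ν ∂μ ≤ C := by
  rw [integral_integral_swap hf]
  calc ∫ y, ∫ x, f x y ∂μ ∂ν ≤ ∫ _, C ∂ν :=
        integral_mono hf.integral_prod_right (integrable_const C) hC
    _ = C := by simp

section Quantization

variable {E : Type*} [NormedAddCommGroup E] [MeasurableSpace E] {r : ℝ} {P : Measure E}

theorem qerr_nonneg (r : ℝ) (P : Measure E) (Γ : Set E) : 0 ≤ qerr r P Γ :=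
  Real.rpow_nonneg (integral_nonneg fun _ => Real.rpow_nonneg infDist_nonneg r) _

theorem qerr_rpow (hr : r ≠ 0) (Γ : Set E) : qerr r P Γ ^ r = ∫ x, infDist x Γ ^ r ∂P := by
  rw [qerr, ← Real.rpow_mul (integral_nonneg fun _ => Real.rpow_nonneg infDist_nonneg r),
    one_div, inv_mul_cancel₀ hr, Real.rpow_one]

theorem IsGreedy.qerr_rpow_succ_le {a : ℕ → E} (ha : IsGreedy r P a) (hr : 0 ≤ r) (n : ℕ)
    (ξ : E) : qerr r P (aSet a (n + 1)) ^ r ≤ qerr r P (insert ξ (aSet a n)) ^ r :=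
  Real.rpow_le_rpow (qerr_nonneg r P _) (ha n ξ) hr

theorem integrable_infDist_rpow [OpensMeasurableSpace E] [IsFiniteMeasure P] (hr : 0 < r)
    (hmom : ∫⁻ x, (‖x‖₊ : ℝ≥0∞) ^ r ∂P < ⊤) {Γ : Set E} (hΓ : Γ.Nonempty) :
    Integrable (fun x => infDist x Γ ^ r) P := by
  obtain ⟨p, hp⟩ := hΓ
  have hr' : ENNReal.ofReal r ≠ 0 := by simpa using hr
  have hnorm : MemLp (fun x => ‖x‖) (ENNReal.ofReal r) P := by
    refine ⟨continuous_norm.aestronglyMeasurable, ?_⟩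
    rw [eLpNorm_lt_top_iff_lintegral_rpow_enorm_lt_top hr' ENNReal.ofReal_ne_top,
      ENNReal.toReal_ofReal hr.le]
    simpa [enorm_eq_nnnorm] using hmom
  have hD : MemLp (fun x => infDist x Γ) (ENNReal.ofReal r) P := by
    refine (hnorm.add (memLp_const ‖p‖)).mono (continuous_infDist_pt Γ).aestronglyMeasurable
      (Filter.Eventually.of_forall fun x => ?_)
    have := (infDist_le_dist_of_mem hp).trans (dist_le_norm_add_norm x p)
    simpa [Real.norm_of_nonneg infDist_nonneg, abs_of_nonneg (by positivity : 0 ≤ ‖x‖ + ‖p‖)]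
      using this
  simpa [Real.norm_of_nonneg infDist_nonneg, ENNReal.toReal_ofReal hr.le] using
    hD.integrable_norm_rpow hr' ENNReal.ofReal_ne_top

theorem integral_indicator_closedBall_le [OpensMeasurableSpace E] [IsFiniteMeasure P]
    (hr : 0 < r) (hmom : ∫⁻ x, (‖x‖₊ : ℝ≥0∞) ^ r ∂P < ⊤) {Γ : Set E} (hΓ : Γ.Nonempty)
    {ρ : ℝ} (hρ : 0 ≤ ρ) (ξ : E) :
    ∫ x, (closedBall x (ρ * infDist x Γ)).indicator
        (fun _ => (1 - ρ ^ r) * infDist x Γ ^ r) ξ ∂P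
      ≤ qerr r P Γ ^ r - qerr r P (insert ξ Γ) ^ r := by
  have hI := integrable_infDist_rpow hr hmom hΓ
  have hIξ := integrable_infDist_rpow hr hmom (insert_nonempty ξ Γ)
  set S : Set E := {x | dist ξ x ≤ ρ * infDist x Γ}
  have hS : MeasurableSet S :=
    (isClosed_le (continuous_const.dist continuous_id)
      (continuous_const.mul (continuous_infDist_pt Γ))).measurableSet
  change ∫ x, S.indicator (fun x => (1 - ρ ^ r) * infDist x Γ ^ r) x ∂P ≤ _
  rw [qerr_rpow hr.ne', qerr_rpow hr.ne', ← integral_sub hI hIξ]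
  refine integral_mono ((hI.const_mul _).indicator hS) (hI.sub hIξ) fun x => ?_
  simp only [infDist_insert_of_nonempty hΓ]
  by_cases hx : x ∈ S
  · rw [indicator_of_mem hx]
    exact one_sub_rpow_mul_rpow_le hr.le hρ dist_nonneg infDist_nonneg
      ((dist_comm x ξ).trans_le hx)
  · rw [indicator_of_notMem hx, sub_nonneg]
    exact Real.rpow_le_rpow (le_min dist_nonneg infDist_nonneg) (min_le_right _ _) hr.le

theorem one_sub_rpow_mul_integral_measure_closedBall_le [SecondCountableTopology E]
    [OpensMeasurableSpace E] [IsFiniteMeasure P] (hr : 0 < r)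
    (hmom : ∫⁻ x, (‖x‖₊ : ℝ≥0∞) ^ r ∂P < ⊤) {Γ : Set E} (hΓ : Γ.Nonempty)
    (ν : Measure E) [IsProbabilityMeasure ν] {ρ : ℝ} (hρ : 0 ≤ ρ) {C : ℝ}
    (hC : ∀ ξ, C ≤ qerr r P (insert ξ Γ) ^ r) :
    (1 - ρ ^ r) * ∫ x, (ν (closedBall x (ρ * infDist x Γ))).toReal * infDist x Γ ^ r ∂P
      ≤ qerr r P Γ ^ r - C := by
  set f : E → E → ℝ := fun x ξ =>
    (closedBall x (ρ * infDist x Γ)).indicator (fun _ => (1 - ρ ^ r) * infDist x Γ ^ r) ξ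
  have hS : MeasurableSet {p : E × E | dist p.2 p.1 ≤ ρ * infDist p.1 Γ} :=
    (isClosed_le (continuous_snd.dist continuous_fst)
      (continuous_const.mul ((continuous_infDist_pt Γ).comp continuous_fst))).measurableSet
  have hf : Integrable (Function.uncurry f) (P.prod ν) :=
    ((integrable_infDist_rpow hr hmom hΓ).const_mul (1 - ρ ^ r)).comp_fst ν |>.indicator hS
  have hinner (x : E) : ∫ ξ, f x ξ ∂ν
      = (1 - ρ ^ r) * ((ν (closedBall x (ρ * infDist x Γ))).toReal * infDist x Γ ^ r) := by
    rw [integral_indicator_const _ measurableSet_closedBall, measureReal_def, smul_eq_mul]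
    ring
  calc (1 - ρ ^ r) * ∫ x, (ν (closedBall x (ρ * infDist x Γ))).toReal * infDist x Γ ^ r ∂P
      = ∫ x, ∫ ξ, f x ξ ∂ν ∂P := by simp only [hinner, integral_const_mul]
    _ ≤ qerr r P Γ ^ r - C := integral_integral_le_of_forall_integral_le hf fun ξ =>
        (integral_indicator_closedBall_le hr hmom hΓ hρ ξ).trans (by linarith [hC ξ])

end Quantization

/-- Increment micro-macro inequality for greedy quantization sequences, with an auxiliary
probability measure `ν`. -/
theorem stmt_1 {E : Type*} [NormedAddCommGroup E] [NormedSpace ℝ E]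
    [FiniteDimensional ℝ E] [MeasurableSpace E] [BorelSpace E]
    (r : ℝ) (hr : 0 < r)
    (P : Measure E) [IsProbabilityMeasure P]
    (hmom : (∫⁻ x, (‖x‖₊ : ℝ≥0∞) ^ r ∂P) < ⊤)
    (a : ℕ → E) (ha : IsGreedy r P a)
    (ν : Measure E) [IsProbabilityMeasure ν]
    (c : ℝ) (hc : c ∈ Set.Ioo (0 : ℝ) (1 / 2))
    (n : ℕ) (hn : 1 ≤ n) :
    ((1 - c) ^ r - c ^ r) / (c + 1) ^ r *
        ∫ x, (ν (closedBall x (c / (c + 1) * infDist x (aSet a n)))).toReal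
          * infDist x (aSet a n) ^ r ∂P
      ≤ qerr r P (aSet a n) ^ r - qerr r P (aSet a (n + 1)) ^ r := by
  obtain ⟨hc0, hc12⟩ := hc
  have hΓ : (aSet a n).Nonempty := ⟨a 1, 1, ⟨le_rfl, hn⟩, rfl⟩
  calc _ ≤ (1 - (c / (c + 1)) ^ r) *
        ∫ x, (ν (closedBall x (c / (c + 1) * infDist x (aSet a n)))).toReal
          * infDist x (aSet a n) ^ r ∂P :=
        mul_le_mul_of_nonneg_right
          (sub_rpow_div_rpow_le_one_sub_div_rpow hr.le hc0.le (by linarith))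
          (integral_nonneg fun x => mul_nonneg ENNReal.toReal_nonneg
            (Real.rpow_nonneg infDist_nonneg r))
    _ ≤ _ := one_sub_rpow_mul_integral_measure_closedBall_le hr hmom hΓ ν (by positivity)
        (ha.qerr_rpow_succ_le hr.le n)
end

section
/- Let C, ρ ∈ (0,+∞) and let (x_n)_{n≥1} be a sequence of non-negative real numbers satisfying x_{n+1} ≤ x_n − C·x_n^{1+ρ} for every n ≥ 1. Then for every n ≥ 1, (n−1)^{1/ρ} · x_n ≤ (1/(Cρ))^{1/ρ}. -/
/-!
Put `y_n = x_n ^ (-ρ)`. Writing the recursion as `x_{n+1} ≤ x_n (1 - C x_n ^ ρ)` and applying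
Bernoulli's inequality with the negative exponent `-ρ` gives `y_{n+1} ≥ y_n (1 + ρ C x_n ^ ρ) = y_n + Cρ`
as long as `x_{n+1} > 0`. Hence `y_n ≥ Cρ (n - 1)`, i.e. `(n - 1) x_n ^ ρ ≤ 1 / (Cρ)`, and the claim
follows by taking `1/ρ`-th powers.
-/

open Real

/-- **Bernoulli's inequality** for non-positive real exponents. -/
theorem one_add_mul_self_le_rpow_one_add_of_nonpos {s p : ℝ} (hs : -1 < s) (hp : p ≤ 0) :
    1 + p * s ≤ (1 + s) ^ p := by
  have hpos : 0 < 1 + s := by linarith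
  have hlog : log (1 + s) ≤ s := by linarith [log_le_sub_one_of_pos hpos]
  calc 1 + p * s ≤ 1 + p * log (1 + s) := by nlinarith
    _ ≤ exp (log (1 + s) * p) := by linarith [add_one_le_exp (log (1 + s) * p)]
    _ = (1 + s) ^ p := (rpow_def_of_pos hpos p).symm

theorem pos_of_le_sub_mul_rpow {a b C ρ : ℝ} (ha : 0 ≤ a) (hb : 0 < b) (hρ : 0 ≤ ρ)
    (h : b ≤ a - C * a ^ (1 + ρ)) : 0 < a := by
  refine ha.lt_of_ne fun ha0 => ?_
  rw [← ha0, zero_rpow (by linarith)] at h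
  linarith

theorem rpow_neg_add_le_rpow_neg {a b C ρ : ℝ} (ha : 0 ≤ a) (hb : 0 < b)
    (hρ : 0 ≤ ρ) (h : b ≤ a - C * a ^ (1 + ρ)) : a ^ (-ρ) + C * ρ ≤ b ^ (-ρ) := by
  have ha_pos : 0 < a := pos_of_le_sub_mul_rpow ha hb hρ h
  set t := C * a ^ ρ
  have hb_le : b ≤ a * (1 - t) := by
    rw [rpow_add ha_pos, rpow_one] at h; linarith
  have ht : t < 1 := by
    by_contra! ht
    nlinarith
  have hinv : a ^ (-ρ) * a ^ ρ = 1 := by rw [← rpow_add ha_pos]; simp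
  calc a ^ (-ρ) + C * ρ = a ^ (-ρ) * (1 + -ρ * -t) := by
        linear_combination (-(C * ρ)) * hinv
    _ ≤ a ^ (-ρ) * (1 + -t) ^ (-ρ) := by
        gcongr
        exact one_add_mul_self_le_rpow_one_add_of_nonpos (by linarith) (by linarith)
    _ = (a * (1 - t)) ^ (-ρ) := by
        rw [mul_rpow ha (by linarith), sub_eq_add_neg]
    _ ≤ b ^ (-ρ) := rpow_le_rpow_of_nonpos hb hb_le (by linarith)

theorem mul_rpow_neg_le_of_recursion {C ρ : ℝ} (hρ : 0 ≤ ρ) {x : ℕ → ℝ}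
    (hx : ∀ n : ℕ, 1 ≤ n → 0 ≤ x n) (hrec : ∀ n : ℕ, 1 ≤ n → x (n + 1) ≤ x n - C * x n ^ (1 + ρ))
    {n : ℕ} (hn : 1 ≤ n) (hxn : 0 < x n) : C * ρ * ((n : ℝ) - 1) ≤ x n ^ (-ρ) := by
  induction n, hn using Nat.le_induction with
  | base => simpa using (rpow_pos_of_pos hxn _).le
  | succ m hm ih =>
    have hxm : 0 < x m := pos_of_le_sub_mul_rpow (hx m hm) hxn hρ (hrec m hm)
    have hstep := rpow_neg_add_le_rpow_neg (hx m hm) hxn hρ (hrec m hm)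
    push_cast
    linarith [ih hxm]

theorem rpow_inv_mul_le_of_mul_le_rpow_neg {c s x ρ : ℝ} (hc : 0 < c) (hs : 0 ≤ s) (hx : 0 < x)
    (hρ : 0 < ρ) (h : c * s ≤ x ^ (-ρ)) : s ^ (1 / ρ) * x ≤ (1 / c) ^ (1 / ρ) := by
  have hsx : s * x ^ ρ ≤ 1 / c := by
    rw [rpow_neg hx.le] at h
    rw [le_div_iff₀ hc]
    calc s * x ^ ρ * c = x ^ ρ * (c * s) := by ring
      _ ≤ x ^ ρ * (x ^ ρ)⁻¹ := by gcongr
      _ = 1 := mul_inv_cancel₀ (by positivity)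
  calc s ^ (1 / ρ) * x = (s * x ^ ρ) ^ (1 / ρ) := by
        rw [mul_rpow hs (by positivity), ← rpow_mul hx.le, mul_one_div_cancel hρ.ne', rpow_one]
    _ ≤ (1 / c) ^ (1 / ρ) := by gcongr

/-- If a non-negative sequence satisfies `x_{n+1} ≤ x_n − C x_n^{1+ρ}` for all `n ≥ 1`,
then `(n−1)^{1/ρ} x_n ≤ (1/(Cρ))^{1/ρ}` for all `n ≥ 1`. -/
theorem stmt_2 (C ρ : ℝ) (hC : 0 < C) (hρ : 0 < ρ)
    (x : ℕ → ℝ) (hx : ∀ n : ℕ, 1 ≤ n → 0 ≤ x n)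
    (hrec : ∀ n : ℕ, 1 ≤ n → x (n + 1) ≤ x n - C * x n ^ (1 + ρ)) :
    ∀ n : ℕ, 1 ≤ n → ((n : ℝ) - 1) ^ (1 / ρ) * x n ≤ (1 / (C * ρ)) ^ (1 / ρ) := by
  intro n hn
  rcases (hx n hn).eq_or_lt with hxn | hxn
  · rw [← hxn, mul_zero]
    positivity
  · have hn' : (0 : ℝ) ≤ (n : ℝ) - 1 := by
      have : (1 : ℝ) ≤ n := by exact_mod_cast hn
      linarith
    exact rpow_inv_mul_le_of_mul_le_rpow_neg (by positivity) hn' hxn hρ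
      (mul_rpow_neg_le_of_recursion hρ.le hx hrec hn hxn)
end

section
/- Let ν = f·λ_d be a Borel probability measure on ℝ^d, let A be a Borel subset of ℝ^d that is star-shaped with respect to a point a₁ ∈ A, and assume the peakless constant p(A) := inf{ λ_d(B(x,t)∩A)/λ_d(B(x,t)) : x ∈ A, 0 < t ≤ ‖x−a₁‖ } is positive. Assume there exist a norm ‖·‖₀ on ℝ^d, a constant M ∈ (0,1], and C₀ ∈ [1,∞) with C₀^{−1}‖x‖₀ ≤ ‖x‖ ≤ C₀‖x‖₀ for all x, such that f(y) ≥ M·f(x) for all x,y ∈ A∖{a₁} with ‖y−a₁‖₀ ≤ ‖x−a₁‖₀. Then for every x ∈ A and every t ∈ (0, ‖x−a₁‖], ν(B(x,t)) ≥ M · p(A) · (2C₀²)^{−d} · V_d · f(x) · t^d. -/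
open MeasureTheory Metric
open scoped ENNReal

/-!
Shrink the ball `B(x, t)` towards `a₁`: with `x' = a₁ + (1 - t / (2‖x - a₁‖)) • (x - a₁)`, which
lies in `A` by star-convexity, the ball `B(x', t / (2C₀²))` is contained in `B(x, t)` and its points
are `‖·‖₀`-closer to `a₁` than `x`, so `f ≥ M f(x)` on its trace on `A`. Since `x'` is far enough
from `a₁`, the peakless constant bounds the Lebesgue measure of that trace from below by
`p(A) V_d (t / (2C₀²))^d`.
-/

section Geometry

variable {E : Type*} [NormedAddCommGroup E] [NormedSpace ℝ E]

theorem seminorm_sub_le_of_mem_closedBall (p : Seminorm ℝ E) {C θ ρ : ℝ} {a x y : E}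
    (hC : 0 ≤ C) (hp : ∀ z, p z ≤ C * ‖z‖) (hθ : 0 ≤ θ) (hρ : C * ρ ≤ (1 - θ) * p (x - a))
    (hy : y ∈ closedBall (a + θ • (x - a)) ρ) : p (y - a) ≤ p (x - a) :=
  calc p (y - a) = p ((y - (a + θ • (x - a))) + θ • (x - a)) := by congr 1; abel
    _ ≤ p (y - (a + θ • (x - a))) + p (θ • (x - a)) := map_add_le_add p _ _
    _ ≤ C * ρ + θ * p (x - a) := by
      rw [map_smul_eq_mul, Real.norm_of_nonneg hθ]
      gcongr
      exact (hp _).trans (mul_le_mul_of_nonneg_left (mem_closedBall_iff_norm.1 hy) hC)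
    _ ≤ p (x - a) := by linarith

theorem exists_closedBall_subset_of_starConvex (p : Seminorm ℝ E) {C : ℝ} (hC : 1 ≤ C)
    (hp_le : ∀ z, p z ≤ C * ‖z‖) (hle_p : ∀ z, ‖z‖ ≤ C * p z) {A : Set E} {a x : E}
    (hA : StarConvex ℝ a A) (hx : x ∈ A) {t : ℝ} (ht : 0 < t) (htx : t ≤ ‖x - a‖) :
    ∃ x' ∈ A, t / (2 * C ^ 2) ≤ ‖x' - a‖ ∧ closedBall x' (t / (2 * C ^ 2)) ⊆ closedBall x t ∧
      ∀ y ∈ closedBall x' (t / (2 * C ^ 2)), p (y - a) ≤ p (x - a) := by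
  set r := ‖x - a‖
  have hr : 0 < r := ht.trans_le htx
  have hCpos : 0 < C := one_pos.trans_le hC
  set θ := 1 - t / (2 * r)
  have hθ0 : 0 ≤ θ := by
    have : t / (2 * r) ≤ 1 / 2 := by rw [div_le_div_iff₀ (by positivity) two_pos]; linarith
    linarith
  have hθ1 : θ ≤ 1 := sub_le_self 1 (by positivity)
  have hs : t / (2 * C ^ 2) ≤ t / 2 :=
    div_le_div_of_nonneg_left ht.le two_pos (by nlinarith)
  have hτr : t / (2 * r) * r = t / 2 := by field_simp
  have hx'a : ‖a + θ • (x - a) - a‖ = r - t / 2 := by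
    rw [add_sub_cancel_left, norm_smul, Real.norm_of_nonneg hθ0, sub_mul, hτr, one_mul]
  have hx'x : dist (a + θ • (x - a)) x = t / 2 := by
    rw [dist_eq_norm, show a + θ • (x - a) - x = (1 - θ) • (a - x) by module, norm_smul,
      Real.norm_of_nonneg (by linarith), norm_sub_rev, sub_sub_cancel, hτr]
  refine ⟨_, hA.add_smul_sub_mem hx hθ0 hθ1, by linarith,
    closedBall_subset_closedBall' (by linarith),
    fun y hy => seminorm_sub_le_of_mem_closedBall p hCpos.le hp_le hθ0 ?_ hy⟩
  calc C * (t / (2 * C ^ 2)) = t / (2 * r) * (r / C) := by field_simp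
    _ ≤ (1 - θ) * p (x - a) := by
      rw [sub_sub_cancel]
      gcongr
      exact (div_le_iff₀' hCpos).2 (hle_p _)

end Geometry

section Measure

variable {E : Type*} [NormedAddCommGroup E] [MeasurableSpace E]

/-- The peakless constant `p(A)` of `A` with respect to `a`. -/
noncomputable def peaklessConst (μ : Measure E) (A : Set E) (a : E) : ℝ :=
  sInf {z : ℝ | ∃ x ∈ A, ∃ t : ℝ, 0 < t ∧ t ≤ ‖x - a‖ ∧
    z = (μ (closedBall x t ∩ A)).toReal / (μ (closedBall x t)).toReal}

theorem peaklessConst_mul_le (μ : Measure E) {A : Set E} {a x : E} (hx : x ∈ A) {t : ℝ}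
    (ht : 0 < t) (htx : t ≤ ‖x - a‖) :
    peaklessConst μ A a * (μ (closedBall x t)).toReal ≤ (μ (closedBall x t ∩ A)).toReal := by
  have hle : peaklessConst μ A a ≤
      (μ (closedBall x t ∩ A)).toReal / (μ (closedBall x t)).toReal :=
    csInf_le ⟨0, by rintro _ ⟨-, -, -, -, -, rfl⟩; positivity⟩ ⟨x, hx, t, ht, htx, rfl⟩
  rcases ENNReal.toReal_nonneg.eq_or_lt with h0 | hpos
  · rw [← h0, mul_zero]
    positivity
  · exact (le_div_iff₀ hpos).1 hle

end Measure

theorem mul_toReal_le_toReal_withDensity {α : Type*} [MeasurableSpace α] {μ : Measure α}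
    {f : α → ℝ} {S : Set α} (hS : MeasurableSet S) {c : ℝ} (hc : 0 ≤ c)
    (hcf : ∀ᵐ y ∂μ, y ∈ S → c ≤ f y)
    (hfin : μ.withDensity (fun y => ENNReal.ofReal (f y)) S ≠ ∞) :
    c * (μ S).toReal ≤ (μ.withDensity (fun y => ENNReal.ofReal (f y)) S).toReal := by
  rw [← ENNReal.toReal_ofReal hc, ← ENNReal.toReal_mul]
  refine ENNReal.toReal_mono hfin ?_
  rw [withDensity_apply _ hS, ← setLIntegral_const]
  exact setLIntegral_mono_ae' hS (hcf.mono fun y hy hyS => ENNReal.ofReal_le_ofReal (hy hyS))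

theorem stmt_7_general {E : Type*} [NormedAddCommGroup E] [NormedSpace ℝ E]
    [FiniteDimensional ℝ E] [MeasurableSpace E] [BorelSpace E]
    (d : ℕ) (hdim : Module.finrank ℝ E = d)
    (μ : Measure E) [μ.IsAddHaarMeasure]
    (f : E → ℝ) (hf0 : ∀ x, 0 ≤ f x)
    (ν : Measure E) (hν : ν = μ.withDensity fun x => ENNReal.ofReal (f x))
    [IsProbabilityMeasure ν]
    (A : Set E) (hA : MeasurableSet A)
    (a₁ : E) (hstar : StarConvex ℝ a₁ A)
    (pA : ℝ)
    (hpA : pA = sInf {z : ℝ | ∃ x ∈ A, ∃ t : ℝ, 0 < t ∧ t ≤ ‖x - a₁‖ ∧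
        z = (μ (closedBall x t ∩ A)).toReal / (μ (closedBall x t)).toReal})
    (N₀ : E → ℝ)
    (hN₀tri : ∀ x y, N₀ (x + y) ≤ N₀ x + N₀ y)
    (hN₀hom : ∀ (c : ℝ) (x : E), N₀ (c • x) = |c| * N₀ x)
    (M : ℝ) (hM : M ∈ Set.Ioc (0 : ℝ) 1)
    (C₀ : ℝ) (hC₀ : 1 ≤ C₀)
    (hequiv : ∀ x, C₀⁻¹ * N₀ x ≤ ‖x‖ ∧ ‖x‖ ≤ C₀ * N₀ x)
    (hrad : ∀ x ∈ A \ {a₁}, ∀ y ∈ A \ {a₁},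
      N₀ (y - a₁) ≤ N₀ (x - a₁) → M * f x ≤ f y) :
    ∀ x ∈ A, ∀ t : ℝ, 0 < t → t ≤ ‖x - a₁‖ →
      M * pA * ((2 * C₀ ^ 2) ^ d)⁻¹ * (μ (closedBall 0 1)).toReal * f x * t ^ d
        ≤ (ν (closedBall x t)).toReal := by
  intro x hx t ht htx
  subst hν hpA
  have hxa : x ≠ a₁ := by
    rintro rfl
    simp only [sub_self, norm_zero] at htx
    linarith
  have : Nontrivial E := nontrivial_of_ne x a₁ hxa
  obtain ⟨x', hx'A, hsx', hball, hcloser⟩ := exists_closedBall_subset_of_starConvex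
    (Seminorm.of N₀ hN₀tri hN₀hom) hC₀ (fun z => (inv_mul_le_iff₀ (by positivity)).1 (hequiv z).1)
    (fun z => (hequiv z).2) hstar hx ht htx
  set s := t / (2 * C₀ ^ 2)
  have hf : ∀ᵐ y ∂μ, y ∈ closedBall x' s ∩ A → M * f x ≤ f y := by
    filter_upwards [measure_eq_zero_iff_ae_notMem.1 (measure_singleton a₁)] with y hya hy
    exact hrad x ⟨hx, hxa⟩ y ⟨hy.2, hya⟩ (hcloser y hy.1)
  have hvol : (μ (closedBall x' s)).toReal = s ^ d * (μ (closedBall 0 1)).toReal := by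
    rw [μ.addHaar_closedBall' x' (by positivity), hdim, ENNReal.toReal_mul,
      ENNReal.toReal_ofReal (by positivity)]
  have hMf : 0 ≤ M * f x := mul_nonneg hM.1.le (hf0 x)
  calc _ = M * f x * (peaklessConst μ A a₁ * (μ (closedBall x' s)).toReal) := by
        rw [hvol, div_pow, peaklessConst]; ring
    _ ≤ M * f x * (μ (closedBall x' s ∩ A)).toReal := by
        gcongr; exact peaklessConst_mul_le μ hx'A (by positivity) hsx'
    _ ≤ _ := mul_toReal_le_toReal_withDensity (measurableSet_closedBall.inter hA) hMf hf
        (measure_ne_top _ _)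
    _ ≤ _ := ENNReal.toReal_mono (measure_ne_top _ _)
        (measure_mono (Set.inter_subset_left.trans hball))

/-- Lower bound on the `ν`-measure of balls for `ν = f·λ_d`, where `f` is almost radial
non-increasing on a star-shaped, peakless set `A` with respect to `a₁` (Lemma 2.10):
for `x ∈ A` and `0 < t ≤ ‖x−a₁‖`,
`ν(B(x,t)) ≥ M · p(A) · (2C₀²)^{−d} · V_d · f(x) · t^d`. -/
theorem stmt_7 {E : Type*} [NormedAddCommGroup E] [NormedSpace ℝ E]
    [FiniteDimensional ℝ E] [MeasurableSpace E] [BorelSpace E]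
    (d : ℕ) (hd : 1 ≤ d) (hdim : Module.finrank ℝ E = d)
    (μ : Measure E) [μ.IsAddHaarMeasure]
    (f : E → ℝ) (hfm : Measurable f) (hf0 : ∀ x, 0 ≤ f x)
    (ν : Measure E) (hν : ν = μ.withDensity fun x => ENNReal.ofReal (f x))
    [IsProbabilityMeasure ν]
    (A : Set E) (hA : MeasurableSet A)
    (a₁ : E) (ha₁ : a₁ ∈ A) (hstar : StarConvex ℝ a₁ A)
    (pA : ℝ)
    (hpA : pA = sInf {z : ℝ | ∃ x ∈ A, ∃ t : ℝ, 0 < t ∧ t ≤ ‖x - a₁‖ ∧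
        z = (μ (closedBall x t ∩ A)).toReal / (μ (closedBall x t)).toReal})
    (hpApos : 0 < pA)
    (N₀ : E → ℝ)
    (hN₀def : ∀ x, N₀ x = 0 ↔ x = 0)
    (hN₀tri : ∀ x y, N₀ (x + y) ≤ N₀ x + N₀ y)
    (hN₀hom : ∀ (c : ℝ) (x : E), N₀ (c • x) = |c| * N₀ x)
    (M : ℝ) (hM : M ∈ Set.Ioc (0 : ℝ) 1)
    (C₀ : ℝ) (hC₀ : 1 ≤ C₀)
    (hequiv : ∀ x, C₀⁻¹ * N₀ x ≤ ‖x‖ ∧ ‖x‖ ≤ C₀ * N₀ x)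
    (hrad : ∀ x ∈ A \ {a₁}, ∀ y ∈ A \ {a₁},
      N₀ (y - a₁) ≤ N₀ (x - a₁) → M * f x ≤ f y) :
    ∀ x ∈ A, ∀ t : ℝ, 0 < t → t ≤ ‖x - a₁‖ →
      M * pA * ((2 * C₀ ^ 2) ^ d)⁻¹ * (μ (closedBall 0 1)).toReal * f x * t ^ d
        ≤ (ν (closedBall x t)).toReal :=
  stmt_7_general d hdim μ f hf0 ν hν A hA a₁ hstar pA hpA N₀ hN₀tri hN₀hom M hM C₀ hC₀ hequiv hrad
end

section
/- Let r ∈ [1,∞), let μ₁,…,μ_d be Borel probability measures on ℝ, and for each k let Γ_k ⊂ ℝ be a nonempty finite set. Equip ℝ^d with the ℓ^r-norm ‖x‖_r = (Σ_{k=1}^d |x_k|^r)^{1/r} and let μ = μ₁ ⊗ … ⊗ μ_d be the product measure on ℝ^d. Then the L^r-quantization error of the product grid Γ₁ × … × Γ_d satisfies e_r(Γ₁ × … × Γ_d, μ)^r = Σ_{k=1}^d e_r(Γ_k, μ_k)^r. -/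
/-!
Both sides are computed pointwise and then integrated. For fixed `x`, the `r`-th power of the
`ℓ^r`-distance to `a` is the separable sum `∑ k, |x k - a k| ^ r`, so it is minimised over the
grid `Γ₁ × … × Γ_d` by choosing each `a k` as a nearest point of `Γ k` to `x k`: the `r`-th power
of the distance to the grid is `∑ k, d(x k, Γ k) ^ r`. Integrating this sum against the product
measure gives the sum of the one-dimensional distortions, since each coordinate projection pushes
`μ₁ ⊗ … ⊗ μ_d` forward to `μ k`.
-/

open MeasureTheory Metric
open scoped ENNReal

section GridDistance

variable {ι E : Type*} [Fintype ι] [PseudoMetricSpace E]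

theorem isLeast_lpDist_image_pi {r : ℝ} (hr : 0 < r) {Γ : ι → Set E}
    (hΓc : ∀ k, IsCompact (Γ k)) (hΓ : ∀ k, (Γ k).Nonempty) (x : ι → E) :
    IsLeast ((fun a : ι → E => (∑ k, dist (x k) (a k) ^ r) ^ (1 / r)) '' Set.univ.pi Γ)
      ((∑ k, infDist (x k) (Γ k) ^ r) ^ (1 / r)) := by
  choose b hb hdist using fun k => (hΓc k).exists_infDist_eq_dist (hΓ k) (x k)
  refine ⟨⟨b, fun k _ => hb k, by simp only [hdist]⟩, ?_⟩
  rintro _ ⟨a, ha, rfl⟩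
  refine Real.rpow_le_rpow (Finset.sum_nonneg fun k _ => Real.rpow_nonneg infDist_nonneg r)
    (Finset.sum_le_sum fun k _ => ?_) (by positivity)
  exact Real.rpow_le_rpow infDist_nonneg (infDist_le_dist_of_mem (ha k trivial)) hr.le

theorem sInf_lpDist_image_pi_rpow {r : ℝ} (hr : 0 < r) {Γ : ι → Set E}
    (hΓc : ∀ k, IsCompact (Γ k)) (hΓ : ∀ k, (Γ k).Nonempty) (x : ι → E) :
    sInf ((fun a : ι → E => (∑ k, dist (x k) (a k) ^ r) ^ (1 / r)) '' Set.univ.pi Γ) ^ r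
      = ∑ k, infDist (x k) (Γ k) ^ r := by
  rw [(isLeast_lpDist_image_pi hr hΓc hΓ x).csInf_eq, one_div,
    Real.rpow_inv_rpow (Finset.sum_nonneg fun k _ => Real.rpow_nonneg infDist_nonneg r) hr.ne']

end GridDistance

theorem lintegral_pi_sum_comp_eval {ι : Type*} [Fintype ι] {α : ι → Type*}
    [∀ k, MeasurableSpace (α k)] (μ : ∀ k, Measure (α k)) [∀ k, IsProbabilityMeasure (μ k)]
    {f : ∀ k, α k → ℝ≥0∞} (hf : ∀ k, Measurable (f k)) :
    ∫⁻ x, ∑ k, f k (x k) ∂Measure.pi μ = ∑ k, ∫⁻ t, f k t ∂μ k := by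
  refine (lintegral_finsetSum _ fun k _ => (hf k).comp (measurable_pi_apply k)).trans ?_
  exact Finset.sum_congr rfl fun k _ => (measurePreserving_eval μ k).lintegral_comp (hf k)

theorem stmt_12_general (d : ℕ) (r : ℝ) (hr : 1 ≤ r)
    (μ : Fin d → Measure ℝ) [∀ k, IsProbabilityMeasure (μ k)]
    (Γ : Fin d → Finset ℝ) (hΓ : ∀ k, (Γ k).Nonempty) :
    (∫⁻ x, ENNReal.ofReal
        (sInf ((fun a : Fin d → ℝ => (∑ k, |x k - a k| ^ r) ^ (1 / r)) ''
          Set.univ.pi fun k => ((Γ k : Set ℝ))) ^ r) ∂(Measure.pi μ))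
      = ∑ k, ∫⁻ t, ENNReal.ofReal (infDist t (Γ k : Set ℝ) ^ r) ∂(μ k) := by
  have hr0 : 0 < r := zero_lt_one.trans_le hr
  have hmeas : ∀ k, Measurable fun t : ℝ => ENNReal.ofReal (infDist t (Γ k : Set ℝ) ^ r) :=
    fun k => ENNReal.measurable_ofReal.comp
      ((continuous_infDist_pt _).rpow_const fun _ => Or.inr hr0.le).measurable
  simp only [← Real.dist_eq, sInf_lpDist_image_pi_rpow hr0 (fun k => (Γ k).finite_toSet.isCompact)
    (fun k => Finset.coe_nonempty.mpr (hΓ k))]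
  simp only [ENNReal.ofReal_sum_of_nonneg fun k _ => Real.rpow_nonneg infDist_nonneg r]
  exact lintegral_pi_sum_comp_eval μ hmeas

/-- Product quantization identity (ℓ^r norm on ℝ^d, product grid, product measure):
`e_r(Γ₁ × … × Γ_d, μ₁ ⊗ … ⊗ μ_d)^r = Σ_k e_r(Γ_k, μ_k)^r`, stated with distortions
(i.e. `r`-th powers of quantization errors) computed as lower integrals in `[0,∞]`.
Here `d(x, Γ₁×…×Γ_d) = min_{a ∈ Γ₁×…×Γ_d} (Σ_k |x_k − a_k|^r)^{1/r}` is the distance for the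
ℓ^r-norm, and on `ℝ`, `d(t,Γ_k) = min_{b ∈ Γ_k} |t − b|` is `Metric.infDist`. -/
theorem stmt_12 (d : ℕ) (hd : 1 ≤ d) (r : ℝ) (hr : 1 ≤ r)
    (μ : Fin d → Measure ℝ) [∀ k, IsProbabilityMeasure (μ k)]
    (Γ : Fin d → Finset ℝ) (hΓ : ∀ k, (Γ k).Nonempty) :
    (∫⁻ x, ENNReal.ofReal
        (sInf ((fun a : Fin d → ℝ => (∑ k, |x k - a k| ^ r) ^ (1 / r)) ''
          Set.univ.pi fun k => ((Γ k : Set ℝ))) ^ r) ∂(Measure.pi μ))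
      = ∑ k, ∫⁻ t, ENNReal.ofReal (infDist t (Γ k : Set ℝ) ^ r) ∂(μ k) :=
  stmt_12_general d r hr μ Γ hΓ
end

section
/- Let X be an ℝ^d-valued random vector (ℝ^d with the Euclidean inner product) with E‖X‖² < ∞, and let X̂ = q(X) where q : ℝ^d → ℝ^d is a Borel function taking finitely many values. Let ρ ∈ [0,1] and let f : ℝ^d → ℝ be differentiable with ρ-Hölder gradient: ‖∇f(x) − ∇f(y)‖ ≤ [∇f]_ρ ‖x−y‖^ρ for all x,y, where [∇f]_ρ < ∞. Assume f(X), f(X̂) are integrable and ∇f(X̂) ∈ L². Then |E f(X) − E f(X̂)| ≤ ‖∇f(X̂)‖_{L²} · ‖E[X | X̂] − X̂‖_{L²} + (1/(1+ρ)) · [∇f]_ρ · E‖X − X̂‖^{1+ρ}. -/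
/-!
Write `f X - f X̂ = ⟪∇f X̂, X - X̂⟫ + R`. Since `∇f X̂` is `σ(X̂)`-measurable, the pull-out
property of conditional expectation lets one replace `X` by `E[X | X̂]` in the expectation of the
linear term, which Cauchy–Schwarz then bounds. The Hölder condition on `∇f` bounds the first-order
Taylor remainder: `|R| ≤ [∇f]_ρ / (1 + ρ) · ‖X - X̂‖^(1+ρ)`.
-/

open MeasureTheory
open scoped ENNReal InnerProductSpace

theorem norm_sub_sub_le_of_holder_fderiv {E F : Type*} [NormedAddCommGroup E] [NormedSpace ℝ E]
    [NormedAddCommGroup F] [NormedSpace ℝ F] {f : E → F} {f' : E → E →L[ℝ] F}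
    (hf : ∀ x, HasFDerivAt f (f' x) x) {ρ L : ℝ} (hρ : 0 ≤ ρ)
    (hHolder : ∀ x y, ‖f' x - f' y‖ ≤ L * ‖x - y‖ ^ ρ) (x y : E) :
    ‖f x - f y - f' y (x - y)‖ ≤ L / (1 + ρ) * ‖x - y‖ ^ (1 + ρ) := by
  set v := x - y
  set g : ℝ → F := fun t => f (y + t • v) - f y - t • f' y v
  set B : ℝ → ℝ := fun t => L / (1 + ρ) * ‖v‖ ^ (1 + ρ) * t ^ (1 + ρ)
  have hg : ∀ t, HasDerivAt g (f' (y + t • v) v - f' y v) t := by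
    intro t
    have hline : HasDerivAt (fun t : ℝ => y + t • v) v t := by
      simpa using ((hasDerivAt_id t).smul_const v).const_add y
    have := (((hf _).comp_hasDerivAt t hline).sub_const (f y)).sub
      ((hasDerivAt_id t).smul_const (f' y v))
    rwa [one_smul] at this
  have hB : ∀ t, HasDerivAt B (L * ‖v‖ ^ (1 + ρ) * t ^ ρ) t := by
    intro t
    refine ((Real.hasDerivAt_rpow_const (Or.inr (by linarith))).const_mul
      (L / (1 + ρ) * ‖v‖ ^ (1 + ρ))).congr_deriv ?_
    rw [add_sub_cancel_left]
    field_simp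
  have hbound :
      ∀ t ∈ Set.Ico (0 : ℝ) 1, ‖f' (y + t • v) v - f' y v‖ ≤ L * ‖v‖ ^ (1 + ρ) * t ^ ρ := by
    rintro t ⟨ht, -⟩
    calc ‖f' (y + t • v) v - f' y v‖ = ‖(f' (y + t • v) - f' y) v‖ := rfl
      _ ≤ ‖f' (y + t • v) - f' y‖ * ‖v‖ := ContinuousLinearMap.le_opNorm _ _
      _ ≤ L * ‖t • v‖ ^ ρ * ‖v‖ := by
        gcongr
        simpa using hHolder (y + t • v) y
      _ = L * ‖v‖ ^ (1 + ρ) * t ^ ρ := by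
        rw [norm_smul, Real.norm_of_nonneg ht, Real.mul_rpow ht (norm_nonneg v),
          Real.rpow_add' (norm_nonneg v) (by linarith), Real.rpow_one]
        ring
  have h1 := image_norm_le_of_norm_deriv_right_le_deriv_boundary
    (fun t _ => (hg t).continuousAt.continuousWithinAt) (fun t _ => (hg t).hasDerivWithinAt)
    (by simp [g, B, Real.zero_rpow (by linarith : 1 + ρ ≠ 0)]) hB hbound
    (Set.right_mem_Icc.2 zero_le_one)
  simpa [g, B, v] using h1

theorem abs_sub_sub_inner_gradient_le {E : Type*} [NormedAddCommGroup E] [InnerProductSpace ℝ E]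
    [CompleteSpace E] {f : E → ℝ} (hf : Differentiable ℝ f) {ρ L : ℝ} (hρ : 0 ≤ ρ)
    (hHolder : ∀ x y, ‖gradient f x - gradient f y‖ ≤ L * ‖x - y‖ ^ ρ) (x y : E) :
    |f x - f y - ⟪gradient f y, x - y⟫_ℝ| ≤ L / (1 + ρ) * ‖x - y‖ ^ (1 + ρ) := by
  have h := norm_sub_sub_le_of_holder_fderiv
    (f' := fun x => InnerProductSpace.toDual ℝ E (gradient f x))
    (fun x => (hf x).hasGradientAt.hasFDerivAt) hρ
    (fun x y => by rw [← map_sub, LinearIsometryEquiv.norm_map]; exact hHolder x y) x y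
  simpa only [InnerProductSpace.toDual_apply_apply, Real.norm_eq_abs] using h

theorem measurable_gradient {E : Type*} [NormedAddCommGroup E] [InnerProductSpace ℝ E]
    [CompleteSpace E] [MeasurableSpace E] [BorelSpace E] (f : E → ℝ) :
    Measurable (gradient f) :=
  (InnerProductSpace.toDual ℝ E).symm.continuous.measurable.comp (measurable_fderiv ℝ f)

section

variable {Ω E : Type*} {m m₀ : MeasurableSpace Ω} {μ : Measure Ω} [NormedAddCommGroup E]

theorem memLp_of_finite_range [IsFiniteMeasure μ] {p : ℝ≥0∞} {f : Ω → E}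
    (hf : AEStronglyMeasurable f μ) (hfin : (Set.range f).Finite) : MemLp f p μ := by
  obtain ⟨C, hC⟩ := hfin.isBounded.exists_norm_le
  exact MemLp.of_bound hf C (ae_of_all _ fun ω => hC _ ⟨ω, rfl⟩)

theorem MeasureTheory.MemLp.integrable_norm_rpow_of_le [IsFiniteMeasure μ] {p : ℝ≥0∞} {r : ℝ}
    {f : Ω → E} (hf : MemLp f p μ) (hr : 0 < r) (hrp : ENNReal.ofReal r ≤ p) :
    Integrable (fun ω => ‖f ω‖ ^ r) μ := by
  simpa [ENNReal.toReal_ofReal hr.le] using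
    (hf.mono_exponent hrp).integrable_norm_rpow (by simpa using hr) ENNReal.ofReal_ne_top

variable [InnerProductSpace ℝ E]

theorem integrable_inner_of_memLp_two {F G : Ω → E} (hF : MemLp F 2 μ) (hG : MemLp G 2 μ) :
    Integrable (fun ω => ⟪F ω, G ω⟫_ℝ) μ :=
  memLp_one_iff_integrable.1 ((innerSL ℝ).memLp_of_bilin 1 hF hG)

theorem abs_integral_inner_le {F G : Ω → E} (hF : MemLp F 2 μ) (hG : MemLp G 2 μ) :
    |∫ ω, ⟪F ω, G ω⟫_ℝ ∂μ| ≤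
      (∫ ω, ‖F ω‖ ^ (2 : ℝ) ∂μ) ^ ((1 : ℝ) / 2) * (∫ ω, ‖G ω‖ ^ (2 : ℝ) ∂μ) ^ ((1 : ℝ) / 2) := by
  have h2 : ENNReal.ofReal 2 = 2 := by norm_num
  calc |∫ ω, ⟪F ω, G ω⟫_ℝ ∂μ| ≤ ∫ ω, ‖F ω‖ * ‖G ω‖ ∂μ :=
        norm_integral_le_of_norm_le (f := fun ω => ⟪F ω, G ω⟫_ℝ) (hF.norm.integrable_mul hG.norm)
          (ae_of_all _ fun ω => norm_inner_le_norm _ _)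
    _ ≤ _ := integral_mul_norm_le_Lp_mul_Lq .two_two (h2 ▸ hF) (h2 ▸ hG)

theorem integral_inner_condExp_sub (hm : m ≤ m₀) [CompleteSpace E] [SigmaFinite (μ.trim hm)]
    {G X Y : Ω → E} (hG : StronglyMeasurable[m] G) (hY : StronglyMeasurable[m] Y)
    (hX : Integrable X μ) (hYi : Integrable Y μ)
    (hGXY : Integrable (fun ω => ⟪G ω, X ω - Y ω⟫_ℝ) μ) :
    ∫ ω, ⟪G ω, (μ[X|m]) ω - Y ω⟫_ℝ ∂μ = ∫ ω, ⟪G ω, X ω - Y ω⟫_ℝ ∂μ := by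
  have hsub : μ[X - Y|m] =ᵐ[μ] μ[X|m] - Y := by
    filter_upwards [condExp_sub hX hYi m] with ω hω
    rw [hω, Pi.sub_apply, Pi.sub_apply, condExp_of_stronglyMeasurable hm hY hYi]
  have hpull := condExp_bilin_of_stronglyMeasurable_left (innerSL ℝ) hG hGXY (hX.sub hYi)
  rw [← integral_condExp hm (f := fun ω => ⟪G ω, X ω - Y ω⟫_ℝ)]
  refine integral_congr_ae ?_
  filter_upwards [hsub, hpull] with ω hsubω hpullω
  calc ⟪G ω, (μ[X|m]) ω - Y ω⟫_ℝ = innerSL ℝ (G ω) ((μ[X - Y|m]) ω) :=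
        congrArg (inner ℝ (G ω)) hsubω.symm
    _ = _ := hpullω.symm

end

theorem abs_integral_sub_le_of_holder_gradient {E : Type*} [NormedAddCommGroup E]
    [InnerProductSpace ℝ E] [CompleteSpace E] [SecondCountableTopology E] [MeasurableSpace E]
    [BorelSpace E] {Ω : Type*} [MeasurableSpace Ω] (P : Measure Ω) [IsFiniteMeasure P]
    {X Y : Ω → E} (hX : MemLp X 2 P) (hYm : Measurable Y) (hY : MemLp Y 2 P)
    {ρ L : ℝ} (hρ0 : 0 ≤ ρ) (hρ1 : ρ ≤ 1) {f : E → ℝ} (hf : Differentiable ℝ f)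
    (hHolder : ∀ x y, ‖gradient f x - gradient f y‖ ≤ L * ‖x - y‖ ^ ρ)
    (hfX : Integrable (fun ω => f (X ω)) P) (hfY : Integrable (fun ω => f (Y ω)) P)
    (hgrad : MemLp (fun ω => gradient f (Y ω)) 2 P) :
    |(∫ ω, f (X ω) ∂P) - ∫ ω, f (Y ω) ∂P| ≤
      (∫ ω, ‖gradient f (Y ω)‖ ^ (2 : ℝ) ∂P) ^ ((1 : ℝ) / 2) *
        (∫ ω, ‖(P[X | MeasurableSpace.comap Y inferInstance]) ω - Y ω‖ ^ (2 : ℝ) ∂P)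
          ^ ((1 : ℝ) / 2) +
      1 / (1 + ρ) * L * ∫ ω, ‖X ω - Y ω‖ ^ (1 + ρ) ∂P := by
  have hm := hYm.comap_le
  have : IsFiniteMeasure (P.trim hm) := isFiniteMeasure_trim hm
  have hXY : MemLp (fun ω => X ω - Y ω) 2 P := hX.sub hY
  have hlin := integrable_inner_of_memLp_two hgrad hXY
  have hsplit : (∫ ω, f (X ω) ∂P) - ∫ ω, f (Y ω) ∂P =
      (∫ ω, ⟪gradient f (Y ω), X ω - Y ω⟫_ℝ ∂P) +
        ∫ ω, f (X ω) - f (Y ω) - ⟪gradient f (Y ω), X ω - Y ω⟫_ℝ ∂P := by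
    have hdiff : Integrable (fun ω => f (X ω) - f (Y ω)) P := hfX.sub hfY
    rw [integral_sub hdiff hlin, integral_sub hfX hfY]
    ring
  have hproj : ∫ ω, ⟪gradient f (Y ω), X ω - Y ω⟫_ℝ ∂P
      = ∫ ω, ⟪gradient f (Y ω), (P[X | MeasurableSpace.comap Y inferInstance]) ω - Y ω⟫_ℝ ∂P :=
    (integral_inner_condExp_sub hm
      ((measurable_gradient f).comp (comap_measurable Y)).stronglyMeasurable
      (comap_measurable Y).stronglyMeasurable (hX.integrable one_le_two)
      (hY.integrable one_le_two) hlin).symm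
  have hCS := abs_integral_inner_le hgrad
    ((hX.condExp (m := MeasurableSpace.comap Y inferInstance) one_le_two).sub hY)
  have hTaylor : |∫ ω, f (X ω) - f (Y ω) - ⟪gradient f (Y ω), X ω - Y ω⟫_ℝ ∂P|
      ≤ 1 / (1 + ρ) * L * ∫ ω, ‖X ω - Y ω‖ ^ (1 + ρ) ∂P := by
    have hint : Integrable (fun ω => ‖X ω - Y ω‖ ^ (1 + ρ)) P :=
      hXY.integrable_norm_rpow_of_le (by linarith)
        (ENNReal.ofReal_le_of_le_toReal (by norm_num; linarith))
    rw [one_div_mul_eq_div, ← integral_const_mul]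
    exact norm_integral_le_of_norm_le
      (f := fun ω => f (X ω) - f (Y ω) - ⟪gradient f (Y ω), X ω - Y ω⟫_ℝ) (hint.const_mul _)
      (ae_of_all _ fun ω => abs_sub_sub_inner_gradient_le hf hρ0 hHolder (X ω) (Y ω))
  rw [hsplit, hproj]
  exact (abs_add_le _ _).trans (add_le_add hCS hTaylor)

theorem stmt_14_general {E : Type*} [NormedAddCommGroup E] [InnerProductSpace ℝ E]
    [FiniteDimensional ℝ E] [MeasurableSpace E] [BorelSpace E]
    {Ω : Type*} [MeasurableSpace Ω] (P : Measure Ω) [IsProbabilityMeasure P]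
    (X : Ω → E) (hX : Measurable X) (hX2 : MemLp X 2 P)
    (q : E → E) (hq : Measurable q) (hqfin : (Set.range q).Finite)
    (ρ : ℝ) (hρ : ρ ∈ Set.Icc (0 : ℝ) 1)
    (f : E → ℝ) (hdiff : Differentiable ℝ f)
    (L : ℝ)
    (hHolder : ∀ x y, ‖gradient f x - gradient f y‖ ≤ L * ‖x - y‖ ^ ρ)
    (hfX : Integrable (fun ω => f (X ω)) P)
    (hfXq : Integrable (fun ω => f (q (X ω))) P)
    (hgrad2 : MemLp (fun ω => gradient f (q (X ω))) 2 P) :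
    |(∫ ω, f (X ω) ∂P) - ∫ ω, f (q (X ω)) ∂P| ≤
      (∫ ω, ‖gradient f (q (X ω))‖ ^ (2 : ℝ) ∂P) ^ ((1 : ℝ) / 2) *
        (∫ ω, ‖(P[X | MeasurableSpace.comap (fun ω => q (X ω)) inferInstance]) ω
            - q (X ω)‖ ^ (2 : ℝ) ∂P) ^ ((1 : ℝ) / 2) +
      1 / (1 + ρ) * L * ∫ ω, ‖X ω - q (X ω)‖ ^ (1 + ρ) ∂P := by
  have hqX : Measurable fun ω => q (X ω) := hq.comp hX
  have hqX2 : MemLp (fun ω => q (X ω)) 2 P :=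
    memLp_of_finite_range hqX.aestronglyMeasurable (hqfin.subset (Set.range_comp_subset_range X q))
  exact abs_integral_sub_le_of_holder_gradient P hX2 hqX hqX2 hρ.1 hρ.2 hdiff hHolder hfX hfXq
    hgrad2

/-- Quantization-based cubature error bound for functions with `ρ`-Hölder gradient:
`|E f(X) − E f(X̂)| ≤ ‖∇f(X̂)‖_{L²} ‖E[X|X̂] − X̂‖_{L²} + (1/(1+ρ)) [∇f]_ρ E‖X − X̂‖^{1+ρ}`,
where `X̂ = q(X)` for a Borel function `q` taking finitely many values. -/
theorem stmt_14 {E : Type*} [NormedAddCommGroup E] [InnerProductSpace ℝ E]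
    [FiniteDimensional ℝ E] [MeasurableSpace E] [BorelSpace E]
    {Ω : Type*} [MeasurableSpace Ω] (P : Measure Ω) [IsProbabilityMeasure P]
    (X : Ω → E) (hX : Measurable X) (hX2 : MemLp X 2 P)
    (q : E → E) (hq : Measurable q) (hqfin : (Set.range q).Finite)
    (ρ : ℝ) (hρ : ρ ∈ Set.Icc (0 : ℝ) 1)
    (f : E → ℝ) (hdiff : Differentiable ℝ f)
    (L : ℝ) (hL : 0 ≤ L)
    (hHolder : ∀ x y, ‖gradient f x - gradient f y‖ ≤ L * ‖x - y‖ ^ ρ)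
    (hfX : Integrable (fun ω => f (X ω)) P)
    (hfXq : Integrable (fun ω => f (q (X ω))) P)
    (hgrad2 : MemLp (fun ω => gradient f (q (X ω))) 2 P) :
    |(∫ ω, f (X ω) ∂P) - ∫ ω, f (q (X ω)) ∂P| ≤
      (∫ ω, ‖gradient f (q (X ω))‖ ^ (2 : ℝ) ∂P) ^ ((1 : ℝ) / 2) *
        (∫ ω, ‖(P[X | MeasurableSpace.comap (fun ω => q (X ω)) inferInstance]) ω
            - q (X ω)‖ ^ (2 : ℝ) ∂P) ^ ((1 : ℝ) / 2) +
      1 / (1 + ρ) * L * ∫ ω, ‖X ω - q (X ω)‖ ^ (1 + ρ) ∂P :=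
  stmt_14_general P X hX hX2 q hq hqfin ρ hρ f hdiff L hHolder hfX hfXq hgrad2
end

section
/- Let n ≥ 1 and let ξ₁,…,ξ_n ∈ [0,1]. Then the L¹-quantization error of the set {ξ₁,…,ξ_n} with respect to the uniform distribution on [0,1] is bounded by the star discrepancy: ∫₀¹ min_{1≤i≤n} |u − ξ_i| du ≤ D_n^*(ξ₁,…,ξ_n). -/
/-!
Write `D` for the star discrepancy. Between two consecutive points `a < b` the empirical
distribution function is constant, say `= c`; the discrepancy bound at `a` and as `t ↑ b` gives
`c - D ≤ a` and `b ≤ c + D`, so the gap has length at most `2 D`. Before the first point the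
function vanishes, so the first point is at most `D`; at the last point it equals `1`, so that
point is at least `1 - D`. Hence every `u ∈ [0,1]` lies within `D` of some `ξ i`, and integrating
this pointwise bound over `[0,1]` gives the theorem.
-/

open MeasureTheory Set

noncomputable def empiricalCDF {n : ℕ} (ξ : Fin n → ℝ) (t : ℝ) : ℝ :=
  ({i | ξ i ≤ t}.ncard : ℝ) / n

noncomputable def starDiscrepancy {n : ℕ} (ξ : Fin n → ℝ) : ℝ :=
  ⨆ u : Icc (0 : ℝ) 1, |empiricalCDF ξ u - u|

namespace empiricalCDF

variable {n : ℕ} {ξ : Fin n → ℝ} {s t : ℝ}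

theorem nonneg : 0 ≤ empiricalCDF ξ t := by
  unfold empiricalCDF
  positivity

theorem le_one : empiricalCDF ξ t ≤ 1 := by
  refine div_le_one_of_le₀ ?_ n.cast_nonneg
  exact_mod_cast (ncard_le_card _).trans_eq (Nat.card_fin n)

theorem congr (h : ∀ i, ξ i ≤ s ↔ ξ i ≤ t) : empiricalCDF ξ s = empiricalCDF ξ t := by
  simp only [empiricalCDF, h]

theorem eq_zero (h : ∀ i, t < ξ i) : empiricalCDF ξ t = 0 := by
  have : {i | ξ i ≤ t} = ∅ := eq_empty_of_forall_notMem fun i => (h i).not_ge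
  simp [empiricalCDF, this]

theorem eq_one (hn : n ≠ 0) (h : ∀ i, ξ i ≤ t) : empiricalCDF ξ t = 1 := by
  simp [empiricalCDF, h, hn]

end empiricalCDF

namespace starDiscrepancy

variable {n : ℕ} {ξ : Fin n → ℝ}

theorem abs_empiricalCDF_sub_le {t : ℝ} (ht : t ∈ Icc (0 : ℝ) 1) :
    |empiricalCDF ξ t - t| ≤ starDiscrepancy ξ := by
  refine le_ciSup (f := fun u : Icc (0 : ℝ) 1 => |empiricalCDF ξ u - u|) ⟨1, ?_⟩ ⟨t, ht⟩
  rintro _ ⟨u, rfl⟩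
  exact abs_sub_le_of_nonneg_of_le empiricalCDF.nonneg empiricalCDF.le_one u.2.1 u.2.2

theorem sub_le_and_le_add_of_eqOn_Ico {s b c : ℝ} (hs : 0 ≤ s) (hsb : s < b) (hb : b ≤ 1)
    (hc : EqOn (empiricalCDF ξ) (fun _ => c) (Ico s b)) :
    c - starDiscrepancy ξ ≤ s ∧ b ≤ c + starDiscrepancy ξ := by
  have hsub : Ico s b ⊆ Icc (c - starDiscrepancy ξ) (c + starDiscrepancy ξ) := fun t ht => by
    have h := abs_empiricalCDF_sub_le (ξ := ξ) ⟨hs.trans ht.1, ht.2.le.trans hb⟩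
    rw [hc ht] at h
    exact mem_Icc_iff_abs_le.1 h
  rw [← isClosed_Icc.closure_subset_iff, closure_Ico hsb.ne] at hsub
  exact (Icc_subset_Icc_iff hsb.le).1 hsub

theorem gap_le_two_mul {a b : Fin n} (ha : 0 ≤ ξ a) (hab : ξ a < ξ b) (hb : ξ b ≤ 1)
    (hgap : ∀ i, ξ i ≤ ξ a ∨ ξ b ≤ ξ i) : ξ b - ξ a ≤ 2 * starDiscrepancy ξ := by
  have hconst : EqOn (empiricalCDF ξ) (fun _ => empiricalCDF ξ (ξ a)) (Ico (ξ a) (ξ b)) :=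
    fun t ht => empiricalCDF.congr fun i =>
      ⟨fun hi => (hgap i).resolve_right fun hbi => (hi.trans_lt ht.2).not_ge hbi,
        fun hi => hi.trans ht.1⟩
  have := sub_le_and_le_add_of_eqOn_Ico ha hab hb hconst
  linarith

theorem ge_of_forall_le {b : Fin n} (hb : 0 < ξ b) (hb' : ξ b ≤ 1) (h : ∀ i, ξ b ≤ ξ i) :
    ξ b ≤ starDiscrepancy ξ := by
  have hzero : EqOn (empiricalCDF ξ) (fun _ => 0) (Ico 0 (ξ b)) :=
    fun t ht => empiricalCDF.eq_zero fun i => ht.2.trans_le (h i)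
  have := sub_le_and_le_add_of_eqOn_Ico le_rfl hb hb' hzero
  linarith

theorem ge_one_sub_of_forall_le {a : Fin n} (ha : ξ a ∈ Icc (0 : ℝ) 1) (h : ∀ i, ξ i ≤ ξ a) :
    1 - ξ a ≤ starDiscrepancy ξ := by
  have := abs_empiricalCDF_sub_le (ξ := ξ) ha
  rw [empiricalCDF.eq_one a.pos.ne' h] at this
  exact (le_abs_self _).trans this

theorem iInf_abs_sub_le [Nonempty (Fin n)] (hξ : ∀ i, ξ i ∈ Icc (0 : ℝ) 1) {u : ℝ}
    (hu : u ∈ Icc (0 : ℝ) 1) : ⨅ i, |u - ξ i| ≤ starDiscrepancy ξ := by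
  have hle (i) : ⨅ j, |u - ξ j| ≤ |u - ξ i| := ciInf_le (Finite.bddBelow_range _) i
  rcases {i | ξ i ≤ u}.eq_empty_or_nonempty with hL | hL
  · obtain ⟨b, -, hb⟩ := exists_min_image univ ξ finite_univ univ_nonempty
    have hub : u < ξ b := not_le.1 (eq_empty_iff_forall_notMem.1 hL b)
    have hD := ge_of_forall_le (hu.1.trans_lt hub) (hξ b).2 fun i => hb i (mem_univ i)
    have := hle b
    rw [abs_of_neg (sub_neg.2 hub)] at this
    linarith [hu.1]
  rcases {i | u < ξ i}.eq_empty_or_nonempty with hR | hR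
  · obtain ⟨a, -, ha⟩ := exists_max_image univ ξ finite_univ univ_nonempty
    have hau : ξ a ≤ u := not_lt.1 (eq_empty_iff_forall_notMem.1 hR a)
    have hD := ge_one_sub_of_forall_le (hξ a) fun i => ha i (mem_univ i)
    have := hle a
    rw [abs_of_nonneg (sub_nonneg.2 hau)] at this
    linarith [hu.2]
  obtain ⟨a, hau, ha⟩ := exists_max_image _ ξ (toFinite _) hL
  obtain ⟨b, hub, hb⟩ := exists_min_image _ ξ (toFinite _) hR
  have hD := gap_le_two_mul (hξ a).1 (lt_of_le_of_lt hau hub) (hξ b).2 fun i =>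
    (le_or_gt (ξ i) u).imp (ha i) (hb i)
  have h₁ := hle a
  have h₂ := hle b
  rw [abs_of_nonneg (sub_nonneg.2 hau)] at h₁
  rw [abs_of_neg (sub_neg.2 hub)] at h₂
  linarith

end starDiscrepancy

/-- The `L¹`-quantization error of `{ξ₁,…,ξ_n} ⊂ [0,1]` for the uniform distribution on
`[0,1]` is bounded by the star discrepancy:
`∫₀¹ min_i |u − ξ_i| du ≤ sup_{u∈[0,1]} |(1/n)·#{i : ξ_i ≤ u} − u|`. -/
theorem stmt_15 (n : ℕ) (hn : 1 ≤ n) (ξ : Fin n → ℝ)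
    (hξ : ∀ i, ξ i ∈ Set.Icc (0 : ℝ) 1) :
    (∫ u in Set.Icc (0 : ℝ) 1, ⨅ i, |u - ξ i|) ≤
      ⨆ u : Set.Icc (0 : ℝ) 1,
        |((Set.ncard {i : Fin n | ξ i ≤ (u : ℝ)}) : ℝ) / n - (u : ℝ)| := by
  have : Nonempty (Fin n) := ⟨⟨0, hn⟩⟩
  change _ ≤ starDiscrepancy ξ
  calc (∫ u in Icc (0 : ℝ) 1, ⨅ i, |u - ξ i|)
      ≤ ∫ _ in Icc (0 : ℝ) 1, starDiscrepancy ξ :=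
        integral_mono_of_nonneg (ae_of_all _ fun _ => Real.iInf_nonneg fun _ => abs_nonneg _)
          (integrableOn_const (by simp))
          (ae_restrict_of_forall_mem measurableSet_Icc fun _ hu =>
            starDiscrepancy.iInf_abs_sub_le hξ hu)
    _ = starDiscrepancy ξ := by simp
end

section
/- Let K ⊆ ℝ^d be a convex cone with vertex 0, i.e. K is convex, 0 ∈ K, and λx ∈ K for every x ∈ K and λ ≥ 0, and assume λ_d(K) > 0. Then inf{ λ_d(B(x,t)∩K)/λ_d(B(x,t)) : x ∈ K, t > 0 } = λ_d(B(0,1)∩K)/V_d. -/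
open MeasureTheory Metric
open scoped ENNReal Pointwise

/-
A cone is invariant under dilations `y ↦ t • y` (`t > 0`) and, being convex, under translations by
its own elements. Dilation scales `μ (B(0,t) ∩ K)` and `μ (B(0,t))` by the same factor `t ^ dim E`,
so the ratio at `(0, t)` equals the ratio at `(0, 1)`; translating `B(0,t) ∩ K` by `x ∈ K` lands
inside `B(x,t) ∩ K`, so the ratio at `(x, t)` is at least the ratio at `(0, t)`. Hence the infimum
is attained at `(0, 1)`.
-/

section Cone

variable {E : Type*} [NormedAddCommGroup E] [NormedSpace ℝ E] {K : Set E}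

theorem add_mem_of_convex_of_smul_mem (hKconv : Convex ℝ K)
    (hKcone : ∀ x ∈ K, ∀ c : ℝ, 0 ≤ c → c • x ∈ K) {x y : E} (hx : x ∈ K) (hy : y ∈ K) :
    x + y ∈ K := by
  have hmid := hKconv hx hy (by norm_num : (0 : ℝ) ≤ 1 / 2) (by norm_num : (0 : ℝ) ≤ 1 / 2)
    (by norm_num)
  convert hKcone _ hmid 2 (by norm_num) using 1
  rw [smul_add, smul_smul, smul_smul]
  norm_num

theorem smul_set_eq_of_smul_mem (hKcone : ∀ x ∈ K, ∀ c : ℝ, 0 ≤ c → c • x ∈ K) {t : ℝ}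
    (ht : 0 < t) : t • K = K := by
  refine (Set.smul_set_subset_iff.2 fun x hx => hKcone x hx t ht.le).antisymm fun y hy => ?_
  exact ⟨t⁻¹ • y, hKcone y hy t⁻¹ (inv_nonneg.2 ht.le), smul_inv_smul₀ ht.ne' y⟩

theorem smul_closedBall_one_inter_eq (hKcone : ∀ x ∈ K, ∀ c : ℝ, 0 ≤ c → c • x ∈ K) {t : ℝ}
    (ht : 0 < t) : t • (closedBall (0 : E) 1 ∩ K) = closedBall 0 t ∩ K := by
  rw [Set.smul_set_inter₀ ht.ne', smul_set_eq_of_smul_mem hKcone ht,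
    _root_.smul_closedBall _ _ zero_le_one, smul_zero, Real.norm_of_nonneg ht.le, mul_one]

theorem vadd_closedBall_zero_inter_subset (hKconv : Convex ℝ K)
    (hKcone : ∀ x ∈ K, ∀ c : ℝ, 0 ≤ c → c • x ∈ K) {x : E} (hx : x ∈ K) (t : ℝ) :
    x +ᵥ (closedBall 0 t ∩ K) ⊆ closedBall x t ∩ K := by
  rintro _ ⟨y, ⟨hyt, hyK⟩, rfl⟩
  refine ⟨?_, add_mem_of_convex_of_smul_mem hKconv hKcone hx hyK⟩
  simpa [dist_eq_norm] using hyt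

end Cone

section Measure

variable {E : Type*} [NormedAddCommGroup E] [NormedSpace ℝ E] [FiniteDimensional ℝ E]
  [MeasurableSpace E] [BorelSpace E] (μ : Measure E) [μ.IsAddHaarMeasure] {K : Set E}

theorem addHaar_closedBall_inter_cone (hKcone : ∀ x ∈ K, ∀ c : ℝ, 0 ≤ c → c • x ∈ K)
    {t : ℝ} (ht : 0 < t) :
    μ (closedBall 0 t ∩ K) = ENNReal.ofReal (t ^ Module.finrank ℝ E) * μ (closedBall 0 1 ∩ K) := by
  rw [← smul_closedBall_one_inter_eq hKcone ht, Measure.addHaar_smul, abs_of_pos (by positivity)]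

theorem addHaar_closedBall_zero_inter_le (hKconv : Convex ℝ K)
    (hKcone : ∀ x ∈ K, ∀ c : ℝ, 0 ≤ c → c • x ∈ K) {x : E} (hx : x ∈ K) (t : ℝ) :
    μ (closedBall 0 t ∩ K) ≤ μ (closedBall x t ∩ K) := by
  rw [← measure_vadd μ x]
  exact measure_mono (vadd_closedBall_zero_inter_subset hKconv hKcone hx t)

theorem closedBall_inter_cone_ratio_le (hKconv : Convex ℝ K)
    (hKcone : ∀ x ∈ K, ∀ c : ℝ, 0 ≤ c → c • x ∈ K) {x : E} (hx : x ∈ K) {t : ℝ} (ht : 0 < t) :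
    (μ (closedBall 0 1 ∩ K)).toReal / (μ (closedBall 0 1)).toReal
      ≤ (μ (closedBall x t ∩ K)).toReal / (μ (closedBall x t)).toReal := by
  have hscale : (ENNReal.ofReal (t ^ Module.finrank ℝ E)).toReal ≠ 0 := by
    rw [ENNReal.toReal_ofReal (by positivity)]
    positivity
  have hratio_zero : (μ (closedBall 0 1 ∩ K)).toReal / (μ (closedBall 0 1)).toReal
      = (μ (closedBall 0 t ∩ K)).toReal / (μ (closedBall 0 t)).toReal := by
    rw [addHaar_closedBall_inter_cone μ hKcone ht, Measure.addHaar_closedBall' μ 0 ht.le,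
      ENNReal.toReal_mul, ENNReal.toReal_mul, mul_div_mul_left _ _ hscale]
  rw [hratio_zero, Measure.addHaar_closedBall_center μ x t]
  refine div_le_div_of_nonneg_right (ENNReal.toReal_mono ?_ ?_) ENNReal.toReal_nonneg
  · exact (measure_mono Set.inter_subset_left).trans_lt measure_closedBall_lt_top |>.ne
  · exact addHaar_closedBall_zero_inter_le μ hKconv hKcone hx t

end Measure

theorem stmt_16_general {E : Type*} [NormedAddCommGroup E] [NormedSpace ℝ E]
    [FiniteDimensional ℝ E] [MeasurableSpace E] [BorelSpace E]
    (μ : Measure E) [μ.IsAddHaarMeasure]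
    (K : Set E) (hKconv : Convex ℝ K) (hK0 : (0 : E) ∈ K)
    (hKcone : ∀ x ∈ K, ∀ c : ℝ, 0 ≤ c → c • x ∈ K) :
    sInf {z : ℝ | ∃ x ∈ K, ∃ t : ℝ, 0 < t ∧
        z = (μ (closedBall x t ∩ K)).toReal / (μ (closedBall x t)).toReal}
      = (μ (closedBall 0 1 ∩ K)).toReal / (μ (closedBall 0 1)).toReal := by
  refine IsLeast.csInf_eq ⟨⟨0, hK0, 1, one_pos, rfl⟩, ?_⟩
  rintro _ ⟨x, hx, t, ht, rfl⟩
  exact closedBall_inter_cone_ratio_le μ hKconv hKcone hx ht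

/-- For a convex cone `K` of vertex `0` with positive Lebesgue (Haar) measure,
the infimum of the ratios `λ_d(B(x,t)∩K)/λ_d(B(x,t))` over `x ∈ K` and `t > 0`
equals `λ_d(B(0,1)∩K)/V_d`. -/
theorem stmt_16 {E : Type*} [NormedAddCommGroup E] [NormedSpace ℝ E]
    [FiniteDimensional ℝ E] [MeasurableSpace E] [BorelSpace E]
    (d : ℕ) (hd : 1 ≤ d) (hdim : Module.finrank ℝ E = d)
    (μ : Measure E) [μ.IsAddHaarMeasure]
    (K : Set E) (hKconv : Convex ℝ K) (hK0 : (0 : E) ∈ K)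
    (hKcone : ∀ x ∈ K, ∀ c : ℝ, 0 ≤ c → c • x ∈ K)
    (hKpos : 0 < μ K) :
    sInf {z : ℝ | ∃ x ∈ K, ∃ t : ℝ, 0 < t ∧
        z = (μ (closedBall x t ∩ K)).toReal / (μ (closedBall x t)).toReal}
      = (μ (closedBall 0 1 ∩ K)).toReal / (μ (closedBall 0 1)).toReal :=
  stmt_16_general μ K hKconv hK0 hKcone
end
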